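/- Let S be an additively reduced semidomain and G a linearly ordered torsion-free abelian group in which every bounded-below subset is well-ordered. If f = ∑_{i=0}^∞ s_i x^{g_i} ∈ S⟦G⟧ with all s_i nonzero and (g_{N+i+1} − g_{N+i})_{i≥0} is strictly increasing for some N, then f is monolithic. -/

import Mathlib

/-- Witness that `S` is a semidomain: an injective semiring hom into an integral domain. -/
structure SemidomainWitness (S : Type*) [CommSemiring S] where
  D : Type
  [commRing : CommRing D]
  [isDomain : IsDomain D]
  emb : S →+* D
  inj : Function.Injective emb

/-- `S` is a semidomain, i.e. (isomorphic to) a subsemiring of an integral domain. -/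
def IsSemidomain (S : Type*) [CommSemiring S] : Prop := Nonempty (SemidomainWitness S)

/-- `S` is additively reduced: `0` is the only additively invertible element. -/
def AddReduced (S : Type*) [AddZeroClass S] : Prop := ∀ a b : S, a + b = 0 → a = 0

/-- `s` is an atom of the additive monoid `(S, +)` (for `S` additively reduced):
it is nonzero and cannot be written as a sum of two nonzero elements. -/
def IsAddAtom {S : Type*} [AddZeroClass S] (s : S) : Prop :=
  s ≠ 0 ∧ ∀ a b : S, s = a + b → a = 0 ∨ b = 0

/-- `S` is additively Furstenberg: every nonzero element is divisible in `(S, +)`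
by an additive atom. -/
def AddFurstenberg (S : Type*) [AddZeroClass S] : Prop :=
  ∀ s : S, s ≠ 0 → ∃ a t : S, IsAddAtom a ∧ s = a + t

section Series
variable {S : Type*} [CommSemiring S] {G : Type*} [AddCommGroup G] [LinearOrder G]
  [IsOrderedAddMonoid G]

/-- `f` belongs to the group series semidomain `S⟦G⟧`: its support is contained in the range
of a strictly increasing sequence of exponents, so `f` is a formal sum `∑_{i=0}^∞ s_i x^{g_i}`. -/
def InSeries (f : HahnSeries G S) : Prop :=
  ∃ g : ℕ → G, StrictMono g ∧ f.support ⊆ Set.range g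

/-- A monomial `s·x^g` in `S⟦G⟧`. -/
def IsMonomialSeries (f : HahnSeries G S) : Prop :=
  ∃ (g : G) (s : S), f = HahnSeries.single g s

/-- `f` is monolithic in `S⟦G⟧`: every factorization of `f` within `S⟦G⟧` has a
monomial factor. -/
def MonolithicSeries (f : HahnSeries G S) : Prop :=
  f ≠ 0 ∧ ∀ p q : HahnSeries G S, InSeries p → InSeries q → f = p * q →
    IsMonomialSeries p ∨ IsMonomialSeries q

/-- `f` is a unit of the semidomain `S⟦G⟧`. -/
def IsUnitSeries (f : HahnSeries G S) : Prop :=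
  InSeries f ∧ ∃ h : HahnSeries G S, InSeries h ∧ f * h = 1

/-- `f` is irreducible in the multiplicative monoid of nonzero elements of `S⟦G⟧`. -/
def IrreducibleSeries (f : HahnSeries G S) : Prop :=
  InSeries f ∧ f ≠ 0 ∧ ¬ IsUnitSeries f ∧
    ∀ p q : HahnSeries G S, InSeries p → InSeries q → f = p * q →
      IsUnitSeries p ∨ IsUnitSeries q

end Series

/-!
Over an additively reduced semidomain no cancellation can occur in a product, so
`supp (p * q) = supp p + supp q`. If `p` has two exponents `a < a'`, every `b ∈ supp q` yields two
exponents `a + b < a' + b` of `f` at distance `a' - a`. Since strictly increasing sequences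
are unbounded above when bounded-below sets are well-ordered, the gaps of `f` eventually exceed
`a' - a`, so `a + b` is one of finitely many exponents and `supp q` is finite. If neither
factor were a monomial, both supports would be finite, and so would `supp f`.
-/

open Filter Pointwise

theorem AddReduced.sum_ne_zero {S ι : Type*} [AddCommMonoid S] (hred : AddReduced S)
    {s : Finset ι} {f : ι → S} {i : ι} (hi : i ∈ s) (hfi : f i ≠ 0) : ∑ j ∈ s, f j ≠ 0 := by
  classical
  rw [← Finset.add_sum_erase s f hi]
  exact fun h => hfi (hred _ _ h)

theorem IsSemidomain.noZeroDivisors {S : Type*} [CommSemiring S] (hS : IsSemidomain S) :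
    NoZeroDivisors S := by
  obtain ⟨⟨D, emb, inj⟩⟩ := hS
  exact inj.noZeroDivisors emb (map_zero _) (map_mul _)

theorem HahnSeries.support_mul_eq_add {S Γ : Type*} [CommSemiring S] [AddCommMonoid Γ]
    [PartialOrder Γ] [IsOrderedCancelAddMonoid Γ] (hS : IsSemidomain S) (hred : AddReduced S)
    (p q : HahnSeries Γ S) : (p * q).support = p.support + q.support := by
  have := hS.noZeroDivisors
  refine subset_antisymm support_mul_subset ?_
  rintro _ ⟨a, ha, b, hb, rfl⟩
  rw [mem_support, coeff_mul]
  exact hred.sum_ne_zero (i := (a, b)) (Finset.mem_antidiagonal.mpr ⟨ha, hb, rfl⟩)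
    (mul_ne_zero ha hb)

theorem isMonomialSeries_of_support_subsingleton {S G : Type*} [CommSemiring S] [AddCommGroup G]
    [LinearOrder G] [IsOrderedAddMonoid G] {p : HahnSeries G S} (hp : p.support.Subsingleton) :
    IsMonomialSeries p := by
  obtain h | ⟨a, ha⟩ := hp.eq_empty_or_singleton
  · exact ⟨0, 0, by simpa using h⟩
  · refine ⟨a, p.coeff a, HahnSeries.ext <| funext fun c => ?_⟩
    by_cases hc : c = a
    · simp [hc]
    · rw [HahnSeries.coeff_single_of_ne hc]
      by_contra hpc
      exact hc (ha ▸ hpc : c ∈ ({a} : Set G))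

section Gaps

variable {G : Type*} [AddCommGroup G] [LinearOrder G] [IsOrderedAddMonoid G]

theorem StrictMono.not_bddAbove_range (hwo : ∀ A : Set G, BddBelow A → A.IsWF) {d : ℕ → G}
    (hd : StrictMono d) : ¬ BddAbove (Set.range d) := by
  rintro ⟨u, hu⟩
  have hbdd : BddBelow (Set.range fun n => -d n) :=
    ⟨-u, by rintro _ ⟨n, rfl⟩; exact neg_le_neg (hu ⟨n, rfl⟩)⟩
  exact (Set.isWF_iff_no_descending_seq.mp (hwo _ hbdd)) _ hd.neg fun n => ⟨n, rfl⟩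

theorem eventually_gt_sub_of_strictMono_gaps (hwo : ∀ A : Set G, BddBelow A → A.IsWF) {g : ℕ → G} {N : ℕ}
    (hmono : StrictMono fun i : ℕ => g (N + i + 1) - g (N + i)) (u : G) :
    ∀ᶠ i in atTop, u < g (i + 1) - g i := by
  obtain ⟨_, ⟨m, rfl⟩, hm⟩ := not_bddAbove_iff.mp (hmono.not_bddAbove_range hwo) u
  filter_upwards [eventually_ge_atTop (N + m)] with i hi
  have hi' : N + (i - N) = i := by omega
  simpa only [hi'] using hm.trans_le (hmono.monotone (by omega : m ≤ i - N))

variable {g : ℕ → G}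

theorem finite_of_add_subset_range (hg : StrictMono g)
    (hgap : ∀ u, ∀ᶠ i in atTop, u < g (i + 1) - g i) {A B : Set G}
    (h : A + B ⊆ Set.range g) {a a' : G} (ha : a ∈ A) (ha' : a' ∈ A) (hlt : a < a') :
    B.Finite := by
  obtain ⟨n, hn⟩ := eventually_atTop.mp (hgap (a' - a))
  have hB : B ⊆ (a + ·) ⁻¹' (g '' Set.Iio n) := by
    intro b hb
    obtain ⟨i, hi⟩ := h (Set.add_mem_add ha hb)
    obtain ⟨j, hj⟩ := h (Set.add_mem_add ha' hb)
    refine ⟨i, Set.mem_Iio.mpr <| not_le.mp fun hni => ?_, hi⟩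
    have hij : i < j := hg.lt_iff_lt.mp (by rw [hi, hj]; exact add_lt_add_left hlt b)
    have hdist : g j - g i = a' - a := by rw [hi, hj]; abel
    exact (hn i hni).not_ge (hdist ▸ sub_le_sub_right (hg.monotone hij) (g i))
  exact (((Set.finite_Iio n).image g).preimage (add_right_injective a).injOn).subset hB

theorem subsingleton_or_subsingleton_of_add_eq_range (hg : StrictMono g)
    (hgap : ∀ u, ∀ᶠ i in atTop, u < g (i + 1) - g i) {A B : Set G}
    (h : A + B = Set.range g) : A.Subsingleton ∨ B.Subsingleton := by
  by_contra hAB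
  obtain ⟨hA, hB⟩ := not_or.mp hAB
  obtain ⟨a, ha, a', ha', haa'⟩ := (Set.not_subsingleton_iff.mp hA).exists_lt
  obtain ⟨b, hb, b', hb', hbb'⟩ := (Set.not_subsingleton_iff.mp hB).exists_lt
  have hAfin := finite_of_add_subset_range hg hgap (add_comm A B ▸ h.le) hb hb' hbb'
  have hBfin := finite_of_add_subset_range hg hgap h.le ha ha' haa'
  exact Set.infinite_range_of_injective hg.injective (h ▸ hAfin.add hBfin)

end Gaps

theorem series_monolithic_of_gaps_strictMono_general
    {S : Type*} [CommSemiring S] {G : Type*} [AddCommGroup G] [LinearOrder G]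
    [IsOrderedAddMonoid G]
    (hS : IsSemidomain S) (hred : AddReduced S)
    (hwo : ∀ A : Set G, BddBelow A → A.IsWF)
    (g : ℕ → G) (hg : StrictMono g)
    (f : HahnSeries G S)
    (hsupp : f.support = Set.range g)
    (N : ℕ)
    (hmono : StrictMono (fun i : ℕ => g (N + i + 1) - g (N + i))) :
    MonolithicSeries f := by
  refine ⟨fun hf => ?_, fun p q _ _ hpq => ?_⟩
  · rw [hf, HahnSeries.support_zero] at hsupp
    exact (Set.range_nonempty g).ne_empty hsupp.symm
  · rw [hpq, HahnSeries.support_mul_eq_add hS hred] at hsupp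
    exact (subsingleton_or_subsingleton_of_add_eq_range hg (eventually_gt_sub_of_strictMono_gaps hwo hmono)
      hsupp).imp isMonomialSeries_of_support_subsingleton isMonomialSeries_of_support_subsingleton

/-- If every bounded-below subset of `G` is well-ordered and the gaps of the exponent
sequence of `f ∈ S⟦G⟧` are eventually strictly increasing, then `f` is monolithic. -/
theorem series_monolithic_of_gaps_strictMono
    {S : Type*} [CommSemiring S] {G : Type*} [AddCommGroup G] [LinearOrder G]
    [IsOrderedAddMonoid G]
    (hS : IsSemidomain S) (hred : AddReduced S)
    (hwo : ∀ A : Set G, BddBelow A → A.IsWF)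
    (s : ℕ → S) (g : ℕ → G) (hg : StrictMono g) (hs : ∀ i, s i ≠ 0)
    (f : HahnSeries G S)
    (hcoeff : ∀ i, f.coeff (g i) = s i) (hsupp : f.support = Set.range g)
    (N : ℕ)
    (hmono : StrictMono (fun i : ℕ => g (N + i + 1) - g (N + i))) :
    MonolithicSeries f :=
  series_monolithic_of_gaps_strictMono_general hS hred hwo g hg f hsupp N hmono
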